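/- arXiv:2102.10926 — 2 statements merged into one kernel-verified Lean document; each statement's English description precedes it below -/
import Mathlib

section
/- Let A, A', B, B', C, C' be nonempty finite types, 𝓔₁ a channel from A' × B' to A × B, and 𝓔₂ a channel from B' × C' to B × C. Then 𝓔₁ and 𝓔₂ are compatible if and only if there exists a positive semidefinite matrix ρ indexed by (A × B × C) × (A' × B' × C') such that, after canonical reindexing, the partial trace of ρ over the output factor C equals J(𝓔₁) ⊗ ((1 / (Fintype.card C' : ℂ)) • (1 : Matrix C' C' ℂ)), and the partial trace of ρ over the output factor A equals J(𝓔₂) ⊗ ((1 / (Fintype.card A' : ℂ)) • (1 : Matrix A' A' ℂ)). -/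
open Matrix Kronecker
open scoped ComplexOrder

noncomputable section

/-- A quantum state: positive semidefinite with unit trace. -/
def IsState {n : Type*} [Fintype n] (ρ : Matrix n n ℂ) : Prop :=
  ρ.PosSemidef ∧ ρ.trace = 1

/-- The Choi matrix of a linear map on matrices. -/
def choi {n m : Type*} [Fintype n] [DecidableEq n]
    (𝓔 : Matrix n n ℂ →ₗ[ℂ] Matrix m m ℂ) : Matrix (m × n) (m × n) ℂ :=
  Matrix.of fun p q =>
    (1 / (Fintype.card n : ℂ)) * 𝓔 (Matrix.single p.2 q.2 1) p.1 q.1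

/-- A quantum channel: trace preserving and completely positive. -/
def IsChannel {n m : Type*} [Fintype n] [DecidableEq n] [Fintype m]
    (𝓔 : Matrix n n ℂ →ₗ[ℂ] Matrix m m ℂ) : Prop :=
  (∀ ρ : Matrix n n ℂ, (𝓔 ρ).trace = ρ.trace) ∧ (choi 𝓔).PosSemidef

/-- Partial trace over the second (right) factor. -/
def trR {a b : Type*} [Fintype b] (M : Matrix (a × b) (a × b) ℂ) : Matrix a a ℂ :=
  Matrix.of fun i j => ∑ k, M (i, k) (j, k)

/-- Partial trace over the first (left) factor. -/
def trL {a b : Type*} [Fintype a] (M : Matrix (a × b) (a × b) ℂ) : Matrix b b ℂ :=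
  Matrix.of fun i j => ∑ k, M (k, i) (k, j)

/-- Partial trace over the third factor of a triple product. -/
def trC3 {a b c : Type*} [Fintype c] (M : Matrix (a × b × c) (a × b × c) ℂ) :
    Matrix (a × b) (a × b) ℂ :=
  Matrix.of fun i j => ∑ k, M (i.1, i.2, k) (j.1, j.2, k)

/-- Compatibility of two local channels with a single global channel. -/
def Compatible {A A' B B' C C' : Type*}
    [Fintype A] [Fintype A'] [Fintype B] [Fintype B'] [Fintype C] [Fintype C']
    [DecidableEq A'] [DecidableEq B'] [DecidableEq C']
    (𝓔₁ : Matrix (A' × B') (A' × B') ℂ →ₗ[ℂ] Matrix (A × B) (A × B) ℂ)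
    (𝓔₂ : Matrix (B' × C') (B' × C') ℂ →ₗ[ℂ] Matrix (B × C) (B × C) ℂ) : Prop :=
  ∃ 𝓔 : Matrix (A' × B' × C') (A' × B' × C') ℂ →ₗ[ℂ] Matrix (A × B × C) (A × B × C) ℂ,
    IsChannel 𝓔 ∧ ∀ ρ : Matrix (A' × B' × C') (A' × B' × C') ℂ, IsState ρ →
      trC3 (𝓔 ρ) = 𝓔₁ (trC3 ρ) ∧ trL (𝓔 ρ) = 𝓔₂ (trL ρ)

/-- Partial trace over the output factor `C`, composed with the canonical reindexing
`(A × B) × (A' × B' × C') ≃ ((A × B) × (A' × B')) × C'`. -/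
def trOutC {A B C A' B' C' : Type*} [Fintype C]
    (M : Matrix ((A × B × C) × (A' × B' × C')) ((A × B × C) × (A' × B' × C')) ℂ) :
    Matrix (((A × B) × (A' × B')) × C') (((A × B) × (A' × B')) × C') ℂ :=
  Matrix.of fun i j => ∑ k,
    M ((i.1.1.1, i.1.1.2, k), (i.1.2.1, i.1.2.2, i.2))
      ((j.1.1.1, j.1.1.2, k), (j.1.2.1, j.1.2.2, j.2))

/-- Partial trace over the output factor `A`, composed with the canonical reindexing
`(B × C) × (A' × B' × C') ≃ ((B × C) × (B' × C')) × A'`. -/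
def trOutA {A B C A' B' C' : Type*} [Fintype A]
    (M : Matrix ((A × B × C) × (A' × B' × C')) ((A × B × C) × (A' × B' × C')) ℂ) :
    Matrix (((B × C) × (B' × C')) × A') (((B × C) × (B' × C')) × A') ℂ :=
  Matrix.of fun i j => ∑ k,
    M ((k, i.1.1.1, i.1.1.2), (i.2, i.1.2.1, i.1.2.2))
      ((k, j.1.1.1, j.1.1.2), (j.2, j.1.2.1, j.1.2.2))

/-! The Choi map `𝓔 ↦ choi 𝓔` is a linear bijection, so the SDP variable `ρ` is the Choi matrix of
a unique linear map `𝓔`, and `ρ.PosSemidef` is the complete positivity of `𝓔`. The partial trace of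
`choi 𝓔` over an output factor is the Choi matrix of `tr_out ∘ 𝓔`, while `choi 𝓔₁ ⊗ₖ (𝟙 / |C'|)` is
the Choi matrix of `𝓔₁ ∘ tr_in`; so the two SDP constraints say exactly that `𝓔` has the marginals
`𝓔₁` and `𝓔₂` as linear maps. Positive semidefinite matrices span all matrices, so this is the
same as having these marginals on states, and trace preservation of `𝓔` is inherited from `𝓔₁`
through its `C`-marginal. -/

section PartialTrace

variable {a b c : Type*}

variable (a b c) in
def trC3LinearMap [Fintype c] : Matrix (a × b × c) (a × b × c) ℂ →ₗ[ℂ] Matrix (a × b) (a × b) ℂ where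
  toFun := trC3
  map_add' M N := by ext; simp [trC3, Finset.sum_add_distrib]
  map_smul' r M := by ext; simp [trC3, Finset.mul_sum]

variable (a b) in
def trLLinearMap [Fintype a] : Matrix (a × b) (a × b) ℂ →ₗ[ℂ] Matrix b b ℂ where
  toFun := trL
  map_add' M N := by ext; simp [trL, Finset.sum_add_distrib]
  map_smul' r M := by ext; simp [trL, Finset.mul_sum]

@[simp] lemma trC3LinearMap_apply [Fintype c] (M : Matrix (a × b × c) (a × b × c) ℂ) :
    trC3LinearMap a b c M = trC3 M := rfl

@[simp] lemma trLLinearMap_apply [Fintype a] (M : Matrix (a × b) (a × b) ℂ) :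
    trLLinearMap a b M = trL M := rfl

lemma trace_trC3 [Fintype a] [Fintype b] [Fintype c] (M : Matrix (a × b × c) (a × b × c) ℂ) :
    (trC3 M).trace = M.trace := by
  simp [trace, trC3, Fintype.sum_prod_type]

lemma trC3_single [Fintype c] [DecidableEq a] [DecidableEq b] [DecidableEq c] (p q : a × b × c) :
    trC3 (single p q (1 : ℂ)) =
      if p.2.2 = q.2.2 then single (p.1, p.2.1) (q.1, q.2.1) 1 else 0 := by
  obtain ⟨p₁, p₂, p₃⟩ := p
  obtain ⟨q₁, q₂, q₃⟩ := q
  ext ⟨i₁, i₂⟩ ⟨j₁, j₂⟩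
  by_cases h : p₃ = q₃
  · subst h
    simp [trC3, single_apply, ite_and]
  · simp [trC3, single_apply, ite_and, h, Ne.symm h]

lemma trL_single [Fintype a] [DecidableEq a] [DecidableEq b] (p q : a × b) :
    trL (single p q (1 : ℂ)) = if p.1 = q.1 then single p.2 q.2 1 else 0 := by
  obtain ⟨p₁, p₂⟩ := p
  obtain ⟨q₁, q₂⟩ := q
  ext i j
  by_cases h : p₁ = q₁
  · subst h
    simp [trL, single_apply, ite_and]
  · simp [trL, single_apply, ite_and, h, Ne.symm h]

end PartialTrace

section Choi

variable {n m : Type*} [Fintype n]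

def fromChoi (J : Matrix (m × n) (m × n) ℂ) : Matrix n n ℂ →ₗ[ℂ] Matrix m m ℂ where
  toFun X := of fun i j => (Fintype.card n : ℂ) * ∑ k, ∑ l, J (i, k) (j, l) * X k l
  map_add' X Y := by ext; simp [mul_add, Finset.sum_add_distrib]
  map_smul' r X := by
    ext
    simp only [Matrix.smul_apply, of_apply, smul_eq_mul, Finset.mul_sum, RingHom.id_apply]
    exact Finset.sum_congr rfl fun _ _ => Finset.sum_congr rfl fun _ _ => by ring

variable [DecidableEq n]

lemma choi_fromChoi (J : Matrix (m × n) (m × n) ℂ) : choi (fromChoi J) = J := by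
  ext ⟨i, k⟩ ⟨j, l⟩
  have : Nonempty n := ⟨k⟩
  have hn : (Fintype.card n : ℂ) ≠ 0 := Nat.cast_ne_zero.2 Fintype.card_ne_zero
  simp [choi, fromChoi, single_apply, ite_and, hn]

lemma choi_surjective : Function.Surjective (choi : (Matrix n n ℂ →ₗ[ℂ] Matrix m m ℂ) → _) :=
  fun J => ⟨fromChoi J, choi_fromChoi J⟩

lemma choi_injective : Function.Injective (choi : (Matrix n n ℂ →ₗ[ℂ] Matrix m m ℂ) → _) := by
  intro F G h
  refine Matrix.ext_linearMap ℂ fun k l => LinearMap.ext_ring ?_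
  ext i j
  have : Nonempty n := ⟨k⟩
  have hn : (Fintype.card n : ℂ) ≠ 0 := Nat.cast_ne_zero.2 Fintype.card_ne_zero
  simpa [choi, hn] using congr_fun₂ h (i, k) (j, l)

open scoped MatrixOrder in
lemma LinearMap.ext_of_isState {V : Type*} [AddCommGroup V] [Module ℂ V]
    {f g : Matrix n n ℂ →ₗ[ℂ] V} (h : ∀ ρ, IsState ρ → f ρ = g ρ) : f = g := by
  refine LinearMap.ext_on CStarAlgebra.span_nonneg fun ρ hρ => ?_
  have hρ : ρ.PosSemidef := nonneg_iff_posSemidef.1 hρ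
  by_cases htr : ρ.trace = 0
  · rw [hρ.trace_eq_zero_iff.1 htr, map_zero, map_zero]
  have hstate : IsState (ρ.trace⁻¹ • ρ) :=
    ⟨hρ.smul (inv_nonneg.2 hρ.trace_nonneg), by rw [trace_smul, smul_eq_mul, inv_mul_cancel₀ htr]⟩
  calc f ρ = ρ.trace • f (ρ.trace⁻¹ • ρ) := by rw [map_smul, smul_inv_smul₀ htr]
    _ = ρ.trace • g (ρ.trace⁻¹ • ρ) := by rw [h _ hstate]
    _ = g ρ := by rw [map_smul, smul_inv_smul₀ htr]

end Choi

section ChoiComp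

variable {a b c n m : Type*} [Fintype n] [DecidableEq n]

lemma choi_trC3LinearMap_comp [Fintype c]
    (𝓔 : Matrix n n ℂ →ₗ[ℂ] Matrix (a × b × c) (a × b × c) ℂ) (p q : (a × b) × n) :
    choi (trC3LinearMap a b c ∘ₗ 𝓔) p q =
      ∑ k, choi 𝓔 ((p.1.1, p.1.2, k), p.2) ((q.1.1, q.1.2, k), q.2) := by
  simp [choi, trC3, Finset.mul_sum]

lemma choi_trLLinearMap_comp [Fintype a]
    (𝓔 : Matrix n n ℂ →ₗ[ℂ] Matrix (a × b) (a × b) ℂ) (p q : b × n) :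
    choi (trLLinearMap a b ∘ₗ 𝓔) p q = ∑ k, choi 𝓔 ((k, p.1), p.2) ((k, q.1), q.2) := by
  simp [choi, trL, Finset.mul_sum]

lemma choi_comp_trC3LinearMap [Fintype a] [Fintype b] [Fintype c]
    [DecidableEq a] [DecidableEq b] [DecidableEq c]
    (𝓔 : Matrix (a × b) (a × b) ℂ →ₗ[ℂ] Matrix m m ℂ) (i j : m) (k l : a × b × c) :
    choi (𝓔 ∘ₗ trC3LinearMap a b c) (i, k) (j, l) =
      choi 𝓔 (i, (k.1, k.2.1)) (j, (l.1, l.2.1)) *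
        ((1 / (Fintype.card c : ℂ)) • (1 : Matrix c c ℂ)) k.2.2 l.2.2 := by
  by_cases h : k.2.2 = l.2.2
  · simp [choi, trC3_single, one_apply, h, Fintype.card_prod]
    ring
  · simp [choi, trC3_single, one_apply, h]

lemma choi_comp_trLLinearMap [Fintype a] [Fintype b] [DecidableEq a] [DecidableEq b]
    (𝓔 : Matrix b b ℂ →ₗ[ℂ] Matrix m m ℂ) (i j : m) (k l : a × b) :
    choi (𝓔 ∘ₗ trLLinearMap a b) (i, k) (j, l) =
      choi 𝓔 (i, k.2) (j, l.2) * ((1 / (Fintype.card a : ℂ)) • (1 : Matrix a a ℂ)) k.1 l.1 := by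
  by_cases h : k.1 = l.1
  · simp [choi, trL_single, one_apply, h, Fintype.card_prod]
    ring
  · simp [choi, trL_single, one_apply, h]

end ChoiComp

section Marginals

variable {A B C A' B' C' : Type*} [Fintype A'] [Fintype B'] [Fintype C']
  [DecidableEq A'] [DecidableEq B'] [DecidableEq C']

lemma trOutC_choi_eq_iff [Fintype C]
    (𝓔 : Matrix (A' × B' × C') (A' × B' × C') ℂ →ₗ[ℂ] Matrix (A × B × C) (A × B × C) ℂ)
    (𝓔₁ : Matrix (A' × B') (A' × B') ℂ →ₗ[ℂ] Matrix (A × B) (A × B) ℂ) :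
    trOutC (choi 𝓔) = choi 𝓔₁ ⊗ₖ ((1 / (Fintype.card C' : ℂ)) • (1 : Matrix C' C' ℂ)) ↔
      trC3LinearMap A B C ∘ₗ 𝓔 = 𝓔₁ ∘ₗ trC3LinearMap A' B' C' := by
  rw [← choi_injective.eq_iff, ← Matrix.ext_iff, ← Matrix.ext_iff]
  simp only [Prod.forall, choi_trC3LinearMap_comp, choi_comp_trC3LinearMap, trOutC, of_apply,
    kroneckerMap_apply]

lemma trOutA_choi_eq_iff [Fintype A]
    (𝓔 : Matrix (A' × B' × C') (A' × B' × C') ℂ →ₗ[ℂ] Matrix (A × B × C) (A × B × C) ℂ)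
    (𝓔₂ : Matrix (B' × C') (B' × C') ℂ →ₗ[ℂ] Matrix (B × C) (B × C) ℂ) :
    trOutA (choi 𝓔) = choi 𝓔₂ ⊗ₖ ((1 / (Fintype.card A' : ℂ)) • (1 : Matrix A' A' ℂ)) ↔
      trLLinearMap A (B × C) ∘ₗ 𝓔 = 𝓔₂ ∘ₗ trLLinearMap A' (B' × C') := by
  rw [← choi_injective.eq_iff, ← Matrix.ext_iff, ← Matrix.ext_iff]
  simp only [Prod.forall, choi_trLLinearMap_comp, choi_comp_trLLinearMap, trOutA, of_apply,
    kroneckerMap_apply]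
  -- the two sides quantify over the same indices in different orders
  constructor <;> intro h <;> intros <;> apply h

end Marginals

lemma trace_apply_eq_of_trC3_comp_eq {A B C A' B' C' : Type*} [Fintype A] [Fintype B] [Fintype C]
    [Fintype A'] [Fintype B'] [Fintype C']
    {𝓔 : Matrix (A' × B' × C') (A' × B' × C') ℂ →ₗ[ℂ] Matrix (A × B × C) (A × B × C) ℂ}
    {𝓔₁ : Matrix (A' × B') (A' × B') ℂ →ₗ[ℂ] Matrix (A × B) (A × B) ℂ}
    (h₁ : ∀ ρ, (𝓔₁ ρ).trace = ρ.trace)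
    (h : trC3LinearMap A B C ∘ₗ 𝓔 = 𝓔₁ ∘ₗ trC3LinearMap A' B' C')
    (ρ : Matrix (A' × B' × C') (A' × B' × C') ℂ) : (𝓔 ρ).trace = ρ.trace := by
  calc (𝓔 ρ).trace = (trC3 (𝓔 ρ)).trace := (trace_trC3 _).symm
    _ = (𝓔₁ (trC3 ρ)).trace := by rw [← trC3LinearMap_apply, ← LinearMap.comp_apply, h]; rfl
    _ = ρ.trace := by rw [h₁, trace_trC3]

theorem compatible_iff_sdp_general
    {A A' B B' C C' : Type*}
    [Fintype A] [Fintype A'] [DecidableEq A']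
    [Fintype B] [Fintype B'] [DecidableEq B']
    [Fintype C] [Fintype C'] [DecidableEq C']
    (𝓔₁ : Matrix (A' × B') (A' × B') ℂ →ₗ[ℂ] Matrix (A × B) (A × B) ℂ)
    (𝓔₂ : Matrix (B' × C') (B' × C') ℂ →ₗ[ℂ] Matrix (B × C) (B × C) ℂ)
    (h₁ : IsChannel 𝓔₁) :
    Compatible 𝓔₁ 𝓔₂ ↔
      ∃ ρ : Matrix ((A × B × C) × (A' × B' × C')) ((A × B × C) × (A' × B' × C')) ℂ,
        ρ.PosSemidef ∧
        trOutC ρ = choi 𝓔₁ ⊗ₖ ((1 / (Fintype.card C' : ℂ)) • (1 : Matrix C' C' ℂ)) ∧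
        trOutA ρ = choi 𝓔₂ ⊗ₖ ((1 / (Fintype.card A' : ℂ)) • (1 : Matrix A' A' ℂ)) := by
  refine (exists_congr fun 𝓔 => ?_).trans choi_surjective.exists.symm
  rw [trOutC_choi_eq_iff, trOutA_choi_eq_iff]
  constructor
  · rintro ⟨h𝓔, hmarg⟩
    exact ⟨h𝓔.2, LinearMap.ext_of_isState fun ρ hρ => (hmarg ρ hρ).1,
      LinearMap.ext_of_isState fun ρ hρ => (hmarg ρ hρ).2⟩
  · rintro ⟨hchoi, hC, hA⟩
    exact ⟨⟨trace_apply_eq_of_trC3_comp_eq h₁.1 hC, hchoi⟩,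
      fun ρ _ => ⟨LinearMap.congr_fun hC ρ, LinearMap.congr_fun hA ρ⟩⟩

/-- SDP formulation of the channel marginal problem: two channels are compatible iff
there is a positive semidefinite matrix whose partial traces reproduce the local
Choi matrices tensored with maximally mixed identities. -/
theorem compatible_iff_sdp
    {A A' B B' C C' : Type*}
    [Fintype A] [DecidableEq A] [Nonempty A] [Fintype A'] [DecidableEq A'] [Nonempty A']
    [Fintype B] [DecidableEq B] [Nonempty B] [Fintype B'] [DecidableEq B'] [Nonempty B']
    [Fintype C] [DecidableEq C] [Nonempty C] [Fintype C'] [DecidableEq C'] [Nonempty C']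
    (𝓔₁ : Matrix (A' × B') (A' × B') ℂ →ₗ[ℂ] Matrix (A × B) (A × B) ℂ)
    (𝓔₂ : Matrix (B' × C') (B' × C') ℂ →ₗ[ℂ] Matrix (B × C) (B × C) ℂ)
    (h₁ : IsChannel 𝓔₁) (h₂ : IsChannel 𝓔₂) :
    Compatible 𝓔₁ 𝓔₂ ↔
      ∃ ρ : Matrix ((A × B × C) × (A' × B' × C')) ((A × B × C) × (A' × B' × C')) ℂ,
        ρ.PosSemidef ∧
        trOutC ρ = choi 𝓔₁ ⊗ₖ ((1 / (Fintype.card C' : ℂ)) • (1 : Matrix C' C' ℂ)) ∧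
        trOutA ρ = choi 𝓔₂ ⊗ₖ ((1 / (Fintype.card A' : ℂ)) • (1 : Matrix A' A' ℂ)) :=
  compatible_iff_sdp_general 𝓔₁ 𝓔₂ h₁
end
end

section
/- (Channel incompatibility is undetectable on image states) Let X and B be nonempty finite types, ω a quantum state on X × B with partial trace over X equal to (1 / (Fintype.card B : ℂ)) • (1 : Matrix B B ℂ), Ω a quantum channel from B to X whose Choi matrix equals ω, and σ a quantum state on B. Define W₁ on X × B by W₁ ρ := (Ω (tr over the first factor of ρ)) ⊗ σ, and W₂ on B × X by W₂ ρ := σ ⊗ (Ω (tr over the second factor of ρ)). Then for every pair of quantum states η₁ on X × B and η₂ on B × X such that the partial trace of η₁ over its first factor equals the partial trace of η₂ over its second factor, the image states are compatible: there exists a quantum state τ on X × B × X whose partial trace over the third factor equals W₁ η₁ and whose partial trace over the first factor equals W₂ η₂. -/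
open Matrix Kronecker
open scoped ComplexOrder

noncomputable section

/-!
The image states are product states. Both `W₁ η₁` and `W₂ η₂` are built from `σ` and the same
state `μ = Ω (trL η₁) = Ω (trR η₂)`, so the product state `μ ⊗ σ ⊗ μ` restricts to `μ ⊗ σ` on
its first two factors and to `σ ⊗ μ` on its last two.
-/

lemma trL_eq_sum_submatrix {a b : Type*} [Fintype a] (M : Matrix (a × b) (a × b) ℂ) :
    trL M = ∑ k, M.submatrix (Prod.mk k) (Prod.mk k) := by
  ext i j
  simp [trL, Matrix.sum_apply]

lemma Matrix.PosSemidef.trL {a b : Type*} [Fintype a] [Fintype b]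
    {M : Matrix (a × b) (a × b) ℂ} (hM : M.PosSemidef) : (trL M).PosSemidef := by
  rw [trL_eq_sum_submatrix]
  exact posSemidef_sum _ fun k _ => hM.submatrix _

lemma trace_trL {a b : Type*} [Fintype a] [Fintype b] (M : Matrix (a × b) (a × b) ℂ) :
    (trL M).trace = M.trace := by
  simp only [trL, trace, diag, of_apply, Fintype.sum_prod_type]
  exact Finset.sum_comm

lemma trL_kronecker {a b : Type*} [Fintype a] (A : Matrix a a ℂ) (B : Matrix b b ℂ) :
    trL (A ⊗ₖ B) = A.trace • B := by
  ext i j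
  simp [trL, trace, Finset.sum_mul]

lemma trC3_kronecker_kronecker {a b c : Type*} [Fintype c] (A : Matrix a a ℂ)
    (B : Matrix b b ℂ) (C : Matrix c c ℂ) :
    trC3 (A ⊗ₖ (B ⊗ₖ C)) = C.trace • (A ⊗ₖ B) := by
  ext i j
  simp [trC3, trace, Finset.mul_sum, mul_comm, mul_left_comm]

/-- `1 ⊗ v`, with `v` read as a column. -/
def idKroneckerCol {n : Type*} (m : Type*) [DecidableEq m] (v : n → ℂ) : Matrix (m × n) m ℂ :=
  of fun p i => if p.1 = i then v p.2 else 0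

lemma conjTranspose_idKroneckerCol_mul_mul {n m : Type*} [Fintype n] [Fintype m]
    [DecidableEq m] (J : Matrix (m × n) (m × n) ℂ) (v : n → ℂ) :
    (idKroneckerCol m v)ᴴ * J * idKroneckerCol m v =
      of fun i j => ∑ k, ∑ l, star (v k) * J (i, k) (j, l) * v l := by
  ext i j
  simp only [idKroneckerCol, mul_apply, of_apply, conjTranspose_apply, Fintype.sum_prod_type,
    apply_ite star, star_zero, ite_mul, mul_ite, zero_mul, mul_zero, Finset.sum_mul,
    Finset.sum_ite_irrel, Finset.sum_const_zero, Finset.sum_ite_eq', Finset.mem_univ, if_true]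
  exact Finset.sum_comm

lemma apply_eq_card_smul_choi {n m : Type*} [Fintype n] [DecidableEq n]
    (Ω : Matrix n n ℂ →ₗ[ℂ] Matrix m m ℂ) (ρ : Matrix n n ℂ) :
    Ω ρ = (Fintype.card n : ℂ) • of fun i j => ∑ k, ∑ l, choi Ω (i, k) (j, l) * ρ k l := by
  cases isEmpty_or_nonempty n
  · simp [Subsingleton.elim ρ 0]
  have hcard : (Fintype.card n : ℂ) ≠ 0 := by simp
  conv_lhs => rw [matrix_eq_sum_single ρ]
  ext i j
  simp only [map_sum, Matrix.sum_apply, Matrix.smul_apply, of_apply, choi, Finset.mul_sum,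
    smul_eq_mul]
  refine Finset.sum_congr rfl fun k _ => Finset.sum_congr rfl fun l _ => ?_
  rw [← mul_one (ρ k l), ← smul_eq_mul, ← smul_single, _root_.map_smul]
  field_simp
  simp [mul_comm]

open scoped MatrixOrder in
/-- Writing `ρ = Cᴴ C`, the output `Ω ρ` is a positive multiple of `∑ r, Vᵣᴴ (choi Ω) Vᵣ`
with `Vᵣ = 1 ⊗ (row r of C)`. -/
lemma posSemidef_apply_of_posSemidef_choi {n m : Type*} [Fintype n] [DecidableEq n]
    [Fintype m] {Ω : Matrix n n ℂ →ₗ[ℂ] Matrix m m ℂ} (hΩ : (choi Ω).PosSemidef)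
    {ρ : Matrix n n ℂ} (hρ : ρ.PosSemidef) : (Ω ρ).PosSemidef := by
  classical
  obtain ⟨C, rfl⟩ := CStarAlgebra.nonneg_iff_eq_star_mul_self.mp hρ.nonneg
  have hsum : (of fun i j => ∑ k, ∑ l, choi Ω (i, k) (j, l) * (star C * C) k l) =
      ∑ r, (idKroneckerCol m (C r))ᴴ * choi Ω * idKroneckerCol m (C r) := by
    ext i j
    simp only [conjTranspose_idKroneckerCol_mul_mul, Matrix.sum_apply, of_apply,
      star_eq_conjTranspose, mul_apply, conjTranspose_apply, Finset.mul_sum]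
    conv_rhs => rw [Finset.sum_comm]
    refine Finset.sum_congr rfl fun k _ => ?_
    conv_rhs => rw [Finset.sum_comm]
    refine Finset.sum_congr rfl fun l _ => Finset.sum_congr rfl fun r _ => ?_
    ring
  rw [apply_eq_card_smul_choi, hsum]
  exact (posSemidef_sum _ fun r _ => hΩ.conjTranspose_mul_mul_same _).smul (by positivity)

lemma IsState.kronecker {a b : Type*} [Fintype a] [Fintype b] {ρ : Matrix a a ℂ}
    {σ : Matrix b b ℂ} (hρ : IsState ρ) (hσ : IsState σ) : IsState (ρ ⊗ₖ σ) :=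
  ⟨hρ.1.kronecker hσ.1, by rw [trace_kronecker, hρ.2, hσ.2, one_mul]⟩

lemma IsState.trL {a b : Type*} [Fintype a] [Fintype b] {ρ : Matrix (a × b) (a × b) ℂ}
    (hρ : IsState ρ) : IsState (trL ρ) :=
  ⟨hρ.1.trL, by rw [trace_trL, hρ.2]⟩

lemma IsChannel.isState_apply {n m : Type*} [Fintype n] [DecidableEq n] [Fintype m]
    {Ω : Matrix n n ℂ →ₗ[ℂ] Matrix m m ℂ} (hΩ : IsChannel Ω) {ρ : Matrix n n ℂ}
    (hρ : IsState ρ) : IsState (Ω ρ) :=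
  ⟨posSemidef_apply_of_posSemidef_choi hΩ.2 hρ.1, by rw [hΩ.1, hρ.2]⟩

theorem image_states_always_compatible_general
    {X B : Type*} [Fintype X]
    [Fintype B] [DecidableEq B]
    (Ω : Matrix B B ℂ →ₗ[ℂ] Matrix X X ℂ) (hΩ : IsChannel Ω)
    (σ : Matrix B B ℂ) (hσ : IsState σ)
    (W₁ : Matrix (X × B) (X × B) ℂ →ₗ[ℂ] Matrix (X × B) (X × B) ℂ)
    (hW₁ : ∀ ρ : Matrix (X × B) (X × B) ℂ, W₁ ρ = Ω (trL ρ) ⊗ₖ σ)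
    (W₂ : Matrix (B × X) (B × X) ℂ →ₗ[ℂ] Matrix (B × X) (B × X) ℂ)
    (hW₂ : ∀ ρ : Matrix (B × X) (B × X) ℂ, W₂ ρ = σ ⊗ₖ Ω (trR ρ)) :
    ∀ (η₁ : Matrix (X × B) (X × B) ℂ) (η₂ : Matrix (B × X) (B × X) ℂ),
      IsState η₁ → IsState η₂ → trL η₁ = trR η₂ →
      ∃ τ : Matrix (X × B × X) (X × B × X) ℂ, IsState τ ∧
        trC3 τ = W₁ η₁ ∧ trL τ = W₂ η₂ := by
  intro η₁ η₂ h₁ _ hmarg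
  have hμ : IsState (Ω (trL η₁)) := hΩ.isState_apply h₁.trL
  refine ⟨_, hμ.kronecker (hσ.kronecker hμ), ?_, ?_⟩
  · rw [trC3_kronecker_kronecker, hμ.2, one_smul, hW₁]
  · rw [trL_kronecker, hμ.2, one_smul, hW₂, ← hmarg]

/-- Channel incompatibility of the pair `W₁, W₂` is undetectable on image states: for
every pair of locally compatible input states, the corresponding output states admit a
common tripartite extension. -/
theorem image_states_always_compatible
    {X B : Type*} [Fintype X] [DecidableEq X] [Nonempty X]
    [Fintype B] [DecidableEq B] [Nonempty B]
    (ω : Matrix (X × B) (X × B) ℂ) (hω : IsState ω)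
    (hωmarg : trL ω = (1 / (Fintype.card B : ℂ)) • (1 : Matrix B B ℂ))
    (Ω : Matrix B B ℂ →ₗ[ℂ] Matrix X X ℂ) (hΩ : IsChannel Ω) (hΩchoi : choi Ω = ω)
    (σ : Matrix B B ℂ) (hσ : IsState σ)
    (W₁ : Matrix (X × B) (X × B) ℂ →ₗ[ℂ] Matrix (X × B) (X × B) ℂ)
    (hW₁ : ∀ ρ : Matrix (X × B) (X × B) ℂ, W₁ ρ = Ω (trL ρ) ⊗ₖ σ)
    (W₂ : Matrix (B × X) (B × X) ℂ →ₗ[ℂ] Matrix (B × X) (B × X) ℂ)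
    (hW₂ : ∀ ρ : Matrix (B × X) (B × X) ℂ, W₂ ρ = σ ⊗ₖ Ω (trR ρ)) :
    ∀ (η₁ : Matrix (X × B) (X × B) ℂ) (η₂ : Matrix (B × X) (B × X) ℂ),
      IsState η₁ → IsState η₂ → trL η₁ = trR η₂ →
      ∃ τ : Matrix (X × B × X) (X × B × X) ℂ, IsState τ ∧
        trC3 τ = W₁ η₁ ∧ trL τ = W₂ η₂ :=
  image_states_always_compatible_general Ω hΩ σ hσ W₁ hW₁ W₂ hW₂
end
end
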